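/- The greatest fuzzy auto-bisimulation of a fuzzy automaton A is a fuzzy equivalence relation (reflexive, symmetric, transitive) and its norm equals 1. -/

import Mathlib

/-- A complete residuated lattice: a complete lattice with a commutative monoid
structure whose unit is the top element, together with a residuum `himp`
satisfying the adjointness property. -/
class CompleteResiduatedLattice (L : Type*) extends CompleteLattice L, CommMonoid L where
  himp : L → L → L
  adjoint : ∀ a b c : L, a * b ≤ c ↔ a ≤ himp b c
  one_eq_top : (1 : L) = ⊤

open CompleteResiduatedLattice

variable {L : Type*} [CompleteResiduatedLattice L]

/-- Sup-⊗ composition of fuzzy relations. -/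
def relComp {X Y Z : Type*} (φ : X → Y → L) (ψ : Y → Z → L) : X → Z → L :=
  fun x z => ⨆ y, φ x y * ψ y z

/-- Composition of a fuzzy relation with a fuzzy set. -/
def relSet {X Y : Type*} (φ : X → Y → L) (g : Y → L) : X → L :=
  fun x => ⨆ y, φ x y * g y

/-- Composition of a fuzzy set with a fuzzy relation. -/
def setRel {X Y : Type*} (f : X → L) (φ : X → Y → L) : Y → L :=
  fun y => ⨆ x, f x * φ x y

/-- The converse of a fuzzy relation. -/
def conv {X Y : Type*} (φ : X → Y → L) : Y → X → L := fun y x => φ x y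

/-- The fuzzy degree of inclusion of fuzzy sets. -/
def fuzS {X : Type*} (f g : X → L) : L := ⨅ x, himp (f x) (g x)

/-- The fuzzy degree of equality of fuzzy sets. -/
def fuzE {X : Type*} (f g : X → L) : L := ⨅ x, himp (f x) (g x) ⊓ himp (g x) (f x)

/-- A fuzzy automaton over the alphabet `Sig` with state set `A`. -/
structure FuzzyAutomaton (L : Type*) (Sig : Type*) (A : Type*) where
  δ : A → Sig → A → L
  σ : A → L
  τ : A → L

variable {Sig : Type*}

/-- A fuzzy simulation between two fuzzy automata. -/
def IsFuzzySimulation {A A' : Type*} (M : FuzzyAutomaton L Sig A)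
    (M' : FuzzyAutomaton L Sig A') (φ : A → A' → L) : Prop :=
  (∀ s, relComp (conv φ) (fun x y => M.δ x s y) ≤
        relComp (fun x' y' => M'.δ x' s y') (conv φ)) ∧
  relSet (conv φ) M.τ ≤ M'.τ

/-- The norm of a fuzzy simulation: `S(σ^A, σ^{A'} ∘ φ⁻¹)`. -/
def simNorm {A A' : Type*} (M : FuzzyAutomaton L Sig A)
    (M' : FuzzyAutomaton L Sig A') (φ : A → A' → L) : L :=
  fuzS M.σ (setRel M'.σ (conv φ))

/-- A fuzzy bisimulation between two fuzzy automata. -/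
def IsFuzzyBisimulation {A A' : Type*} (M : FuzzyAutomaton L Sig A)
    (M' : FuzzyAutomaton L Sig A') (φ : A → A' → L) : Prop :=
  IsFuzzySimulation M M' φ ∧ IsFuzzySimulation M' M (conv φ)

/-- The norm of a fuzzy bisimulation. -/
def bisimNorm {A A' : Type*} (M : FuzzyAutomaton L Sig A)
    (M' : FuzzyAutomaton L Sig A') (φ : A → A' → L) : L :=
  simNorm M M' φ ⊓ simNorm M' M (conv φ)

/-- The fuzzy language recognized from a given state:
`L(A,x)(s₁…sₙ) = (δ_{s₁} ∘ … ∘ δ_{sₙ} ∘ τ)(x)`. -/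
def langFrom {A : Type*} (M : FuzzyAutomaton L Sig A) : A → List Sig → L
  | x, [] => M.τ x
  | x, s :: w => ⨆ y, M.δ x s y * langFrom M y w

/-- The fuzzy language recognized by a fuzzy automaton. -/
def lang {A : Type*} (M : FuzzyAutomaton L Sig A) (w : List Sig) : L :=
  ⨆ x, M.σ x * langFrom M x w

/-! The fuzzy bisimulations of `M` with itself contain the identity and are closed under converse,
composition and arbitrary suprema, so their supremum `g` is the greatest one and contains the
identity, its converse and its square; this makes `g` a fuzzy equivalence. Reflexivity alone gives
`σ ≤ σ ∘ g` and `σ ≤ σ ∘ g⁻¹`, so the norm is `1`. -/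

namespace CompleteResiduatedLattice

theorem gc_mul_himp (b : L) : GaloisConnection (· * b) (himp b) := fun a c => adjoint a b c

instance : IsQuantale L where
  mul_sSup_distrib x s := by simp_rw [mul_comm x]; exact (gc_mul_himp x).l_sSup
  sSup_mul_distrib s y := (gc_mul_himp y).l_sSup

theorem iSup_mul {ι : Sort*} (f : ι → L) (a : L) : (⨆ i, f i) * a = ⨆ i, f i * a :=
  (gc_mul_himp a).l_iSup

theorem mul_iSup {ι : Sort*} (a : L) (f : ι → L) : a * (⨆ i, f i) = ⨆ i, a * f i := by
  simp_rw [mul_comm a]; exact iSup_mul f a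

theorem one_le_himp_iff {a b : L} : 1 ≤ himp a b ↔ a ≤ b := by
  rw [← adjoint, one_mul]

end CompleteResiduatedLattice

theorem fuzS_eq_one_iff {X : Type*} {f g : X → L} : fuzS f g = 1 ↔ f ≤ g := by
  rw [fuzS, one_eq_top, eq_top_iff, le_iInf_iff, ← one_eq_top]
  simp only [one_le_himp_iff, Pi.le_def]

section Relations

variable {W X Y Z : Type*}

omit [CompleteResiduatedLattice L] in
@[simp]
theorem conv_conv (φ : X → Y → L) : conv (conv φ) = φ := rfl

theorem conv_iSup {ι : Sort*} (φ : ι → X → Y → L) :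
    conv (⨆ i, φ i) = ⨆ i, conv (φ i) := by
  funext y x
  simp only [conv, iSup_apply]

theorem conv_relComp (φ : X → Y → L) (ψ : Y → Z → L) :
    conv (relComp φ ψ) = relComp (conv ψ) (conv φ) := by
  funext z x
  simp only [conv, relComp, mul_comm]

theorem le_relComp (φ : X → Y → L) (ψ : Y → Z → L) (x : X) (y : Y) (z : Z) :
    φ x y * ψ y z ≤ relComp φ ψ x z :=
  le_iSup (fun y => φ x y * ψ y z) y

theorem le_relSet (φ : X → Y → L) (f : Y → L) (x : X) (y : Y) :
    φ x y * f y ≤ relSet φ f x :=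
  le_iSup (fun y => φ x y * f y) y

theorem le_setRel (f : X → L) (φ : X → Y → L) (x : X) (y : Y) :
    f x * φ x y ≤ setRel f φ y :=
  le_iSup (fun x => f x * φ x y) x

theorem relComp_mono {φ φ' : X → Y → L} {ψ ψ' : Y → Z → L}
    (hφ : φ ≤ φ') (hψ : ψ ≤ ψ') :
    relComp φ ψ ≤ relComp φ' ψ' := fun x z =>
  iSup_mono fun y => mul_le_mul' (hφ x y) (hψ y z)

theorem relSet_mono {φ φ' : X → Y → L} {f f' : Y → L} (hφ : φ ≤ φ') (hf : f ≤ f') :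
    relSet φ f ≤ relSet φ' f' := fun x =>
  iSup_mono fun y => mul_le_mul' (hφ x y) (hf y)

theorem relComp_assoc (φ : W → X → L) (ψ : X → Y → L) (χ : Y → Z → L) :
    relComp (relComp φ ψ) χ = relComp φ (relComp ψ χ) := by
  funext w z
  simp only [relComp, iSup_mul, mul_iSup, mul_assoc]
  exact iSup_comm

theorem relSet_relComp (φ : X → Y → L) (ψ : Y → Z → L) (f : Z → L) :
    relSet (relComp φ ψ) f = relSet φ (relSet ψ f) := by
  funext x
  simp only [relSet, relComp, iSup_mul, mul_iSup, mul_assoc]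
  exact iSup_comm

theorem iSup_relComp {ι : Sort*} (φ : ι → X → Y → L) (ψ : Y → Z → L) :
    relComp (⨆ i, φ i) ψ = ⨆ i, relComp (φ i) ψ := by
  funext x z
  simp only [relComp, iSup_apply, iSup_mul]
  exact iSup_comm

theorem iSup_relSet {ι : Sort*} (φ : ι → X → Y → L) (f : Y → L) :
    relSet (⨆ i, φ i) f = ⨆ i, relSet (φ i) f := by
  funext x
  simp only [relSet, iSup_apply, iSup_mul]
  exact iSup_comm

open Classical in
noncomputable def idRel (X : Type*) : X → X → L := fun x y => if x = y then 1 else ⊥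

theorem idRel_self (x : X) : idRel (L := L) X x x = 1 := if_pos rfl

theorem idRel_of_ne {x y : X} (h : x ≠ y) : idRel (L := L) X x y = ⊥ := if_neg h

theorem conv_idRel : conv (idRel (L := L) X) = idRel X := by
  funext x y
  by_cases h : y = x
  · subst h; rfl
  · rw [conv, idRel_of_ne h, idRel_of_ne (Ne.symm h)]

theorem iSup_idRel_mul (x : X) (f : X → L) : ⨆ y, idRel X x y * f y = f x := by
  refine le_antisymm (iSup_le fun y => ?_) (le_iSup_of_le x (by rw [idRel_self, one_mul]))
  by_cases h : x = y
  · rw [← h, idRel_self, one_mul]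
  · simp [idRel_of_ne h]

theorem idRel_relComp (φ : X → Y → L) : relComp (idRel X) φ = φ := by
  funext x z
  exact iSup_idRel_mul x (φ · z)

theorem relComp_idRel (φ : X → Y → L) : relComp φ (idRel Y) = φ := by
  rw [← conv_conv (relComp φ _), conv_relComp, conv_idRel, idRel_relComp, conv_conv]

theorem idRel_relSet (f : X → L) : relSet (idRel X) f = f := by
  funext x
  exact iSup_idRel_mul x f

end Relations

section Bisimulation

variable {A A' A'' : Type*} {M : FuzzyAutomaton L Sig A} {M' : FuzzyAutomaton L Sig A'}
  {M'' : FuzzyAutomaton L Sig A''}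

theorem isFuzzySimulation_idRel (M : FuzzyAutomaton L Sig A) :
    IsFuzzySimulation M M (idRel A) := by
  refine ⟨fun s => ?_, ?_⟩ <;>
    simp only [conv_idRel, idRel_relComp, relComp_idRel, idRel_relSet, le_rfl]

theorem IsFuzzySimulation.comp {φ : A → A' → L} {ψ : A' → A'' → L}
    (hφ : IsFuzzySimulation M M' φ) (hψ : IsFuzzySimulation M' M'' ψ) :
    IsFuzzySimulation M M'' (relComp φ ψ) := by
  refine ⟨fun s => ?_, ?_⟩ <;> rw [conv_relComp]
  · calc relComp (relComp (conv ψ) (conv φ)) (fun x y => M.δ x s y)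
        = relComp (conv ψ) (relComp (conv φ) (fun x y => M.δ x s y)) := relComp_assoc ..
      _ ≤ relComp (conv ψ) (relComp (fun x y => M'.δ x s y) (conv φ)) :=
          relComp_mono le_rfl (hφ.1 s)
      _ = relComp (relComp (conv ψ) (fun x y => M'.δ x s y)) (conv φ) := (relComp_assoc ..).symm
      _ ≤ relComp (relComp (fun x y => M''.δ x s y) (conv ψ)) (conv φ) :=
          relComp_mono (hψ.1 s) le_rfl
      _ = relComp (fun x y => M''.δ x s y) (relComp (conv ψ) (conv φ)) := relComp_assoc ..
  · rw [relSet_relComp]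
    exact (relSet_mono le_rfl hφ.2).trans hψ.2

theorem IsFuzzySimulation.iSup {ι : Sort*} {φ : ι → A → A' → L}
    (hφ : ∀ i, IsFuzzySimulation M M' (φ i)) : IsFuzzySimulation M M' (⨆ i, φ i) := by
  refine ⟨fun s => ?_, ?_⟩ <;> rw [conv_iSup]
  · rw [iSup_relComp]
    exact iSup_le fun i => (hφ i).1 s |>.trans (relComp_mono le_rfl (le_iSup (conv ∘ φ) i))
  · rw [iSup_relSet]
    exact iSup_le fun i => (hφ i).2

theorem isFuzzyBisimulation_idRel (M : FuzzyAutomaton L Sig A) :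
    IsFuzzyBisimulation M M (idRel A) :=
  ⟨isFuzzySimulation_idRel M, conv_idRel (L := L) (X := A) ▸ isFuzzySimulation_idRel M⟩

theorem IsFuzzyBisimulation.conv {φ : A → A' → L} (h : IsFuzzyBisimulation M M' φ) :
    IsFuzzyBisimulation M' M (conv φ) :=
  ⟨h.2, h.1⟩

theorem IsFuzzyBisimulation.comp {φ : A → A' → L} {ψ : A' → A'' → L}
    (hφ : IsFuzzyBisimulation M M' φ) (hψ : IsFuzzyBisimulation M' M'' ψ) :
    IsFuzzyBisimulation M M'' (relComp φ ψ) :=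
  ⟨hφ.1.comp hψ.1, conv_relComp φ ψ ▸ hψ.2.comp hφ.2⟩

theorem IsFuzzyBisimulation.iSup {ι : Sort*} {φ : ι → A → A' → L}
    (hφ : ∀ i, IsFuzzyBisimulation M M' (φ i)) : IsFuzzyBisimulation M M' (⨆ i, φ i) :=
  ⟨.iSup fun i => (hφ i).1, conv_iSup φ ▸ .iSup fun i => (hφ i).2⟩

theorem simNorm_eq_one_of_refl {φ : A → A → L} (hφ : ∀ x, 1 ≤ φ x x) :
    simNorm M M φ = 1 :=
  fuzS_eq_one_iff.2 fun x =>
    calc M.σ x = M.σ x * 1 := (mul_one _).symm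
      _ ≤ M.σ x * φ x x := mul_le_mul' le_rfl (hφ x)
      _ ≤ setRel M.σ (conv φ) x := le_setRel M.σ (conv φ) x x

theorem bisimNorm_eq_one_of_refl {φ : A → A → L} (hφ : ∀ x, 1 ≤ φ x x) :
    bisimNorm M M φ = 1 := by
  rw [bisimNorm, simNorm_eq_one_of_refl hφ, simNorm_eq_one_of_refl (φ := conv φ) hφ, inf_idem]

variable (M M' M'')

noncomputable def greatestBisim : A → A' → L :=
  fun x y => ⨆ φ ∈ {φ : A → A' → L | IsFuzzyBisimulation M M' φ}, φ x y

theorem greatestBisim_eq_iSup :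
    greatestBisim M M' = ⨆ φ ∈ {φ : A → A' → L | IsFuzzyBisimulation M M' φ}, φ := by
  funext x y
  simp only [greatestBisim, iSup_apply]

theorem isFuzzyBisimulation_greatestBisim : IsFuzzyBisimulation M M' (greatestBisim M M') :=
  greatestBisim_eq_iSup M M' ▸ .iSup fun _ => .iSup id

variable {M M'} in
theorem IsFuzzyBisimulation.le_greatestBisim {φ : A → A' → L}
    (h : IsFuzzyBisimulation M M' φ) : φ ≤ greatestBisim M M' := fun x y =>
  le_iSup₂ (f := fun ψ (_ : IsFuzzyBisimulation M M' ψ) => ψ x y) φ h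

theorem one_le_greatestBisim (x : A) : 1 ≤ greatestBisim M M x x :=
  (idRel_self x).symm.le.trans ((isFuzzyBisimulation_idRel M).le_greatestBisim x x)

theorem conv_greatestBisim : conv (greatestBisim M M') = greatestBisim M' M :=
  le_antisymm (isFuzzyBisimulation_greatestBisim M M').conv.le_greatestBisim
    fun y x => (isFuzzyBisimulation_greatestBisim M' M).conv.le_greatestBisim x y

theorem relComp_greatestBisim_le :
    relComp (greatestBisim M M') (greatestBisim M' M'') ≤ greatestBisim M M'' :=
  ((isFuzzyBisimulation_greatestBisim M M').comp
    (isFuzzyBisimulation_greatestBisim M' M'')).le_greatestBisim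

end Bisimulation

theorem stmt18_general {A : Type*} (M : FuzzyAutomaton L Sig A) :
    letI g : A → A → L := fun x y => ⨆ φ ∈ {φ : A → A → L | IsFuzzyBisimulation M M φ}, φ x y
    (∀ x, (1 : L) ≤ g x x) ∧ conv g = g ∧ relComp g g ≤ g ∧ bisimNorm M M g = 1 :=
  ⟨one_le_greatestBisim M, conv_greatestBisim M M, relComp_greatestBisim_le M M M,
    bisimNorm_eq_one_of_refl (one_le_greatestBisim M)⟩

theorem stmt18 {A : Type*} [Nonempty A] (M : FuzzyAutomaton L Sig A) :
    letI g : A → A → L := fun x y => ⨆ φ ∈ {φ : A → A → L | IsFuzzyBisimulation M M φ}, φ x y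
    (∀ x, (1 : L) ≤ g x x) ∧ conv g = g ∧ relComp g g ≤ g ∧ bisimNorm M M g = 1 :=
  stmt18_general M
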